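/- The auxiliary TU game coincides with the average game: for every TUX game w on player set N, v*_w(S) = v̄_w(S) for all S ⊆ N, where v*_w(S) = w_{−(N\S)}(S,∅) and v̄_w(S) = ∑_{π∈Π(N\S)} (∏_{B∈π}(|B|−1)!/(n−s)!) w(S,π). -/
import Mathlib


open Finset BigOperators

namespace TUX

/-- A (raw) game in partition function form: assigns a real worth to each
coalition together with a partition (of the outside players). -/
abbrev Game := Finset ℕ → Finset (Finset ℕ) → ℝ

/-- A TU game (characteristic function). -/
abbrev TUGame := Finset ℕ → ℝ

/-- A solution for TUX games: given a player set and a game, assigns payoffs. -/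
abbrev Sol := Finset ℕ → Game → ℕ → ℝ

/-- `w` is a genuine TUX game: the empty coalition has worth 0. -/
def IsTUX (w : Game) : Prop := ∀ π, w ∅ π = 0

/-- `π` is a partition of the finite set `M`. -/
def IsPartition (M : Finset ℕ) (π : Finset (Finset ℕ)) : Prop :=
  (∀ B ∈ π, B ⊆ M) ∧ ∅ ∉ π ∧ ∀ x ∈ M, (π.filter (fun B => x ∈ B)).card = 1

instance (M : Finset ℕ) : DecidablePred (IsPartition M) := fun π => by
  unfold IsPartition; infer_instance

/-- The finite set of all partitions of `M`. -/
def partitionsOf (M : Finset ℕ) : Finset (Finset (Finset ℕ)) :=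
  (M.powerset.powerset).filter (IsPartition M)

/-- The Ewens(θ = 1) probability of the partition `π` of `M`:
`p*_M(π) = ∏_{B ∈ π} (|B| - 1)! / |M|!`. -/
noncomputable def pstar (M : Finset ℕ) (π : Finset (Finset ℕ)) : ℝ :=
  (∏ B ∈ π, ((B.card - 1).factorial : ℝ)) / (M.card.factorial : ℝ)

/-- The block of `π` containing `j` (junk if `π` is not a partition containing `j`). -/
def blockOf (π : Finset (Finset ℕ)) (j : ℕ) : Finset ℕ :=
  (π.filter (fun B => j ∈ B)).sup id

/-- Add player `i` to the block `B` of `π`. -/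
def addToBlock (π : Finset (Finset ℕ)) (i : ℕ) (B : Finset ℕ) : Finset (Finset ℕ) :=
  insert (insert i B) (π.erase B)

/-- The restriction operator `r⋆` removing a single player `i` from a game on `N`:
`w₋ᵢ(S,π) = (1/(n-s)) (w(S, π₊ᵢ⇝∅) + ∑_{j ∈ N∖(S∪{i})} w(S, π₊ᵢ⇝π(j)))`. -/
noncomputable def restrict1 (N : Finset ℕ) (w : Game) (i : ℕ) : Game :=
  fun S π =>
    ((N.card : ℝ) - (S.card : ℝ))⁻¹ *
      (w S (insert {i} π) + ∑ j ∈ (N \ S).erase i, w S (addToBlock π i (blockOf π j)))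

/-- Iterated removal of a list of players. -/
noncomputable def restrictL : Finset ℕ → Game → List ℕ → Game
  | _, w, [] => w
  | N, w, i :: l => restrictL (N.erase i) (restrict1 N w i) l

/-- Removal of a set of players (via the increasing enumeration; by path
independence of `r⋆` the order is immaterial). -/
noncomputable def restrictSet (N : Finset ℕ) (w : Game) (T : Finset ℕ) : Game :=
  restrictL N w (T.sort (· ≤ ·))

/-- The average TU game `v̄_w` of a TUX game `w` on `N`. -/
noncomputable def avg (N : Finset ℕ) (w : Game) : TUGame :=
  fun S => ∑ π ∈ partitionsOf (N \ S), pstar (N \ S) π * w S π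

/-- The auxiliary TU game `v*_w(S) = w₋(N∖S)(S,∅)`. -/
noncomputable def auxGame (N : Finset ℕ) (w : Game) : TUGame :=
  fun S => restrictSet N w (N \ S) S ∅

/-- The Shapley value of a TU game on player set `N`. -/
noncomputable def shapley (N : Finset ℕ) (v : TUGame) (i : ℕ) : ℝ :=
  ∑ S ∈ (N.erase i).powerset,
    (((S.card.factorial : ℝ) * ((N.card - S.card - 1).factorial : ℝ)) / (N.card.factorial : ℝ)) *
      (v (insert i S) - v S)

/-- The MPW solution: the Shapley value of the average game. -/
noncomputable def MPW (N : Finset ℕ) (w : Game) (i : ℕ) : ℝ := shapley N (avg N w) i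

/-- The MPW solution as a solution for TUX games. -/
noncomputable def MPWsol : Sol := fun N w i => MPW N w i

/-- The scaled Dirac TUX game `δ_{T,τ}` on `N`. -/
noncomputable def scaledDirac (N T : Finset ℕ) (τ : Finset (Finset ℕ)) : Game :=
  fun S π => if S = T ∧ π = τ then (pstar (N \ T) τ)⁻¹ else 0

/-- `τ₋S`: remove the players of `S` from each block of `τ`, discarding empty blocks. -/
def partRemove (τ : Finset (Finset ℕ)) (S : Finset ℕ) : Finset (Finset ℕ) :=
  (τ.image (fun B => B \ S)).erase ∅

/-- The Sobolev-reduced TUX game `w₋ⱼ^{So,φ}` on `N ∖ {j}`. -/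
noncomputable def sobRed (N : Finset ℕ) (φ : Sol) (w : Game) (j : ℕ) : Game :=
  fun S π =>
    ((S.card : ℝ) / ((N.card : ℝ) - 1)) * (w (insert j S) π - φ N w j) +
      (1 - (S.card : ℝ) / ((N.card : ℝ) - 1)) * restrict1 N w j S π

/-- The Hart–Mas-Colell reduced TUX game `w₋T^{HM,φ}` on `N ∖ T`. -/
noncomputable def hmRed (N : Finset ℕ) (φ : Sol) (w : Game) (T : Finset ℕ) : Game :=
  fun S π => w (S ∪ T) π - ∑ j ∈ T, φ (S ∪ T) (restrictSet N w (N \ (S ∪ T))) j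

/-- Efficiency for TUX games. -/
def EfficientX (φ : Sol) : Prop :=
  ∀ (N : Finset ℕ) (w : Game), IsTUX w → ∑ i ∈ N, φ N w i = w N ∅

/-- Balanced contributions for TUX games (w.r.t. the restriction operator `r⋆`). -/
def BalancedContributionsX (φ : Sol) : Prop :=
  ∀ (N : Finset ℕ) (w : Game), IsTUX w → ∀ i ∈ N, ∀ j ∈ N,
    φ N w i - φ (N.erase j) (restrict1 N w j) i
      = φ N w j - φ (N.erase i) (restrict1 N w i) j

/-- 2-standardness for TUX games. -/
def TwoStandardX (φ : Sol) : Prop :=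
  ∀ i j : ℕ, i ≠ j → ∀ w : Game, IsTUX w →
    φ {i, j} w i
      = w {i} {({j} : Finset ℕ)}
        + (w {i, j} ∅ - w {j} {({i} : Finset ℕ)} - w {i} {({j} : Finset ℕ)}) / 2

/-- Sobolev consistency for TUX games. -/
def SobolevConsistentX (φ : Sol) : Prop :=
  ∀ (N : Finset ℕ) (w : Game), IsTUX w → ∀ i ∈ N, ∀ j ∈ N, i ≠ j →
    φ N w i = φ (N.erase j) (sobRed N φ w j) i

/-- Hart–Mas-Colell consistency (single-player removal) for TUX games. -/
def HMConsistentX (φ : Sol) : Prop :=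
  ∀ (N : Finset ℕ) (w : Game), IsTUX w → ∀ i ∈ N, ∀ j ∈ N, i ≠ j →
    φ N w i = φ (N.erase j) (hmRed N φ w {j}) i

/-- Set Hart–Mas-Colell consistency (removal of a coalition) for TUX games. -/
def SetHMConsistentX (φ : Sol) : Prop :=
  ∀ (N : Finset ℕ) (w : Game), IsTUX w → ∀ i ∈ N, ∀ T ⊆ N.erase i,
    φ N w i = φ (N \ T) (hmRed N φ w T) i

/-- The finite set of embedded coalitions `(T,τ)` of `N` with `T ≠ ∅`. -/
def embeddedNE (N : Finset ℕ) : Finset (Finset ℕ × Finset (Finset ℕ)) :=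
  (N.powerset ×ˢ N.powerset.powerset).filter
    (fun p => p.1.Nonempty ∧ IsPartition (N \ p.1) p.2)

end TUX
namespace TUX

variable {M M' : Finset ℕ} {π : Finset (Finset ℕ)} {i x : ℕ}

lemma mem_partitionsOf : π ∈ partitionsOf M ↔ IsPartition M π := by
  constructor
  · exact fun h => (Finset.mem_filter.mp h).2
  · intro h
    refine Finset.mem_filter.mpr ⟨?_, h⟩
    rw [Finset.mem_powerset]
    intro B hB
    exact Finset.mem_powerset.mpr (h.1 B hB)

lemma IsPartition.filter_eq (h : IsPartition M π) (hx : x ∈ M) :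
    π.filter (fun B => x ∈ B) = {blockOf π x} := by
  obtain ⟨B, hB⟩ := Finset.card_eq_one.mp (h.2.2 x hx)
  rw [blockOf, hB, Finset.sup_singleton]
  rfl

lemma IsPartition.blockOf_mem (h : IsPartition M π) (hx : x ∈ M) :
    blockOf π x ∈ π ∧ x ∈ blockOf π x := by
  have h2 : blockOf π x ∈ π.filter (fun B => x ∈ B) := by
    rw [h.filter_eq hx]; exact Finset.mem_singleton_self _
  simpa using h2

lemma IsPartition.eq_blockOf (h : IsPartition M π) (hx : x ∈ M) {B : Finset ℕ}
    (hB : B ∈ π) (hxB : x ∈ B) : B = blockOf π x := by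
  have h2 : B ∈ π.filter (fun C => x ∈ C) := Finset.mem_filter.mpr ⟨hB, hxB⟩
  rw [h.filter_eq hx] at h2
  exact Finset.mem_singleton.mp h2

lemma IsPartition.biUnion_eq (h : IsPartition M π) : π.biUnion id = M := by
  ext x
  simp only [Finset.mem_biUnion, id]
  constructor
  · rintro ⟨B, hB, hxB⟩; exact h.1 B hB hxB
  · intro hx; exact ⟨blockOf π x, (h.blockOf_mem hx).1, (h.blockOf_mem hx).2⟩

lemma IsPartition.sum_blockOf (h : IsPartition M π) (f : Finset ℕ → ℝ) :
    ∑ j ∈ M, f (blockOf π j) = ∑ B ∈ π, (B.card : ℝ) * f B := by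
  rw [← h.biUnion_eq, Finset.sum_biUnion ?_]
  · refine Finset.sum_congr rfl fun B hB => ?_
    have h1 : ∀ j ∈ id B, f (blockOf π j) = f B := by
      intro j hj
      simp only [id] at hj
      rw [← h.eq_blockOf (h.1 B hB hj) hB hj]
    rw [Finset.sum_congr rfl h1, Finset.sum_const, nsmul_eq_mul]
    simp
  · intro B hB C hC hBC
    rw [Finset.mem_coe] at hB hC
    refine Finset.disjoint_left.mpr fun {x} hxB hxC => hBC ?_
    simp only [id] at hxB hxC
    have hxM := h.1 B hB hxB
    rw [h.eq_blockOf hxM hB hxB, h.eq_blockOf hxM hC hxC]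

lemma partitionsOf_empty : partitionsOf (∅ : Finset ℕ) = {∅} := by
  ext π
  rw [mem_partitionsOf, Finset.mem_singleton]
  constructor
  · intro h
    by_contra hne
    obtain ⟨B, hB⟩ := Finset.nonempty_iff_ne_empty.mpr hne
    have h2 := h.1 B hB
    rw [Finset.subset_empty] at h2
    exact h.2.1 (h2 ▸ hB)
  · rintro rfl
    exact ⟨by simp, by simp, by simp⟩

lemma IsPartition.notMem_block (hi : i ∉ M') (hπ : IsPartition M' π) {B : Finset ℕ}
    (hB : B ∈ π) : i ∉ B := fun h => hi (hπ.1 B hB h)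

lemma IsPartition.singleton_notMem (hi : i ∉ M') (hπ : IsPartition M' π) :
    ({i} : Finset ℕ) ∉ π :=
  fun h => hi (hπ.1 _ h (Finset.mem_singleton_self i))

lemma isPartition_insertSingle (hi : i ∉ M') (hπ : IsPartition M' π) :
    IsPartition (insert i M') (insert {i} π) := by
  refine ⟨?_, ?_, ?_⟩
  · intro B hB
    rcases Finset.mem_insert.mp hB with rfl | hB
    · simp
    · exact (hπ.1 B hB).trans (Finset.subset_insert _ _)
  · intro h
    rcases Finset.mem_insert.mp h with h | h
    · exact Finset.singleton_ne_empty i h.symm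
    · exact hπ.2.1 h
  · intro x hx
    rcases Finset.mem_insert.mp hx with rfl | hx
    · have h1 : π.filter (fun B => x ∈ B) = ∅ :=
        Finset.filter_eq_empty_iff.mpr (fun {B} hB hxB => hπ.notMem_block hi hB hxB)
      rw [Finset.filter_insert, if_pos (Finset.mem_singleton_self x), h1]
      simp
    · have hxi : x ≠ i := fun h => hi (h ▸ hx)
      rw [Finset.filter_insert, if_neg (by simpa using hxi)]
      exact hπ.2.2 x hx

lemma isPartition_addToBlock (hi : i ∉ M') (hπ : IsPartition M' π) {B : Finset ℕ}
    (hB : B ∈ π) : IsPartition (insert i M') (addToBlock π i B) := by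
  have hiB : i ∉ B := hπ.notMem_block hi hB
  have hkey : insert i B ∉ π.erase B :=
    fun h => hi (hπ.1 _ (Finset.mem_of_mem_erase h) (Finset.mem_insert_self i B))
  refine ⟨?_, ?_, ?_⟩
  · intro C hC
    rcases Finset.mem_insert.mp hC with rfl | hC
    · exact Finset.insert_subset_insert _ (hπ.1 B hB)
    · exact (hπ.1 C (Finset.mem_of_mem_erase hC)).trans (Finset.subset_insert _ _)
  · intro h
    rcases Finset.mem_insert.mp h with h | h
    · exact (Finset.insert_ne_empty _ _) h.symm
    · exact hπ.2.1 (Finset.mem_of_mem_erase h)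
  · intro x hx
    rcases Finset.mem_insert.mp hx with rfl | hx
    · have h1 : (π.erase B).filter (fun C => x ∈ C) = ∅ :=
        Finset.filter_eq_empty_iff.mpr
          (fun {C} hC hxC => hπ.notMem_block hi (Finset.mem_of_mem_erase hC) hxC)
      rw [addToBlock, Finset.filter_insert, if_pos (Finset.mem_insert_self _ _), h1]
      simp
    · have hxi : x ≠ i := fun h => hi (h ▸ hx)
      by_cases hxB : x ∈ B
      · have h1 : (π.erase B).filter (fun C => x ∈ C) = ∅ := by
          refine Finset.filter_eq_empty_iff.mpr (fun {C} hC hxC => ?_)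
          exact (Finset.ne_of_mem_erase hC)
            ((hπ.eq_blockOf hx (Finset.mem_of_mem_erase hC) hxC).trans
              (hπ.eq_blockOf hx hB hxB).symm)
        rw [addToBlock, Finset.filter_insert, if_pos (Finset.mem_insert_of_mem hxB), h1]
        simp
      · have hxiB : x ∉ insert i B := by simp [hxi, hxB]
        have hBf : B ∉ π.filter (fun C => x ∈ C) := fun h =>
          hxB (Finset.mem_filter.mp h).2
        rw [addToBlock, Finset.filter_insert, if_neg hxiB, Finset.filter_erase,
          Finset.erase_eq_of_notMem hBf]
        exact hπ.2.2 x hx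

lemma blockOf_addToBlock (hi : i ∉ M') (hπ : IsPartition M' π) {B : Finset ℕ}
    (hB : B ∈ π) : blockOf (addToBlock π i B) i = insert i B :=
  ((isPartition_addToBlock hi hπ hB).eq_blockOf (Finset.mem_insert_self i M')
    (Finset.mem_insert_self _ _) (Finset.mem_insert_self i B)).symm

lemma singleton_notMem_addToBlock (hi : i ∉ M') (hπ : IsPartition M' π) {B : Finset ℕ}
    (hB : B ∈ π) : ({i} : Finset ℕ) ∉ addToBlock π i B := by
  intro h
  rcases Finset.mem_insert.mp h with h | h
  · have hBne : B.Nonempty := Finset.nonempty_iff_ne_empty.mpr (fun he => hπ.2.1 (he ▸ hB))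
    obtain ⟨x, hx⟩ := hBne
    have hxi : x = i := by
      have : x ∈ ({i} : Finset ℕ) := h ▸ Finset.mem_insert_of_mem hx
      simpa using this
    exact hπ.notMem_block hi hB (hxi ▸ hx)
  · exact hπ.singleton_notMem hi (Finset.mem_of_mem_erase h)

end TUX
namespace TUX

variable {M M' : Finset ℕ} {π : Finset (Finset ℕ)} {i x : ℕ}

lemma pstar_insertSingle (hi : i ∉ M') (hπ : IsPartition M' π) :
    pstar (insert i M') (insert {i} π) = pstar M' π * ((M'.card : ℝ) + 1)⁻¹ := by
  have h2 : ({i} : Finset ℕ) ∉ π := hπ.singleton_notMem hi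
  have hm : (M'.card.factorial : ℝ) ≠ 0 := Nat.cast_ne_zero.mpr (Nat.factorial_ne_zero _)
  have hm1 : ((M'.card : ℝ) + 1) ≠ 0 := by positivity
  rw [pstar, pstar, Finset.prod_insert h2, Finset.card_insert_of_notMem hi,
    Nat.factorial_succ]
  simp only [Finset.card_singleton, Nat.sub_self, Nat.factorial_zero, Nat.cast_one, one_mul]
  push_cast
  rw [div_mul_eq_div_div_swap, div_eq_mul_inv]

lemma pstar_addToBlock (hi : i ∉ M') (hπ : IsPartition M' π) {B : Finset ℕ} (hB : B ∈ π) :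
    pstar (insert i M') (addToBlock π i B)
      = pstar M' π * (B.card : ℝ) * ((M'.card : ℝ) + 1)⁻¹ := by
  have hiB : i ∉ B := hπ.notMem_block hi hB
  have hkey : insert i B ∉ π.erase B :=
    fun h => hi (hπ.1 _ (Finset.mem_of_mem_erase h) (Finset.mem_insert_self i B))
  have hBne : B.Nonempty := Finset.nonempty_iff_ne_empty.mpr (fun he => hπ.2.1 (he ▸ hB))
  have hBpos : 0 < B.card := Finset.card_pos.mpr hBne
  have hfac : (B.card).factorial = B.card * (B.card - 1).factorial := by
    obtain ⟨k, hk⟩ := Nat.exists_eq_succ_of_ne_zero hBpos.ne'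
    rw [hk]
    simp [Nat.factorial_succ]
  have hm : (M'.card.factorial : ℝ) ≠ 0 := Nat.cast_ne_zero.mpr (Nat.factorial_ne_zero _)
  have hm1 : ((M'.card : ℝ) + 1) ≠ 0 := by positivity
  rw [pstar, pstar, addToBlock, Finset.prod_insert hkey,
    Finset.card_insert_of_notMem hiB, Finset.card_insert_of_notMem hi,
    Nat.factorial_succ, ← Finset.mul_prod_erase π _ hB, Nat.add_sub_cancel, hfac]
  push_cast
  rw [div_mul_eq_div_div_swap, div_eq_mul_inv]
  ring

lemma isPartition_eraseSingle (hi : i ∉ M') {π' : Finset (Finset ℕ)}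
    (hπ' : IsPartition (insert i M') π') (hmem : ({i} : Finset ℕ) ∈ π') :
    IsPartition M' (π'.erase {i}) := by
  refine ⟨?_, fun h => hπ'.2.1 (Finset.mem_of_mem_erase h), ?_⟩
  · intro C hC
    have hCne : C ≠ {i} := Finset.ne_of_mem_erase hC
    have hCsub := hπ'.1 C (Finset.mem_of_mem_erase hC)
    intro x hxC
    rcases Finset.mem_insert.mp (hCsub hxC) with rfl | hx
    · exact absurd ((hπ'.eq_blockOf (Finset.mem_insert_self x M')
        (Finset.mem_of_mem_erase hC) hxC).trans
        (hπ'.eq_blockOf (Finset.mem_insert_self x M') hmem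
          (Finset.mem_singleton_self x)).symm) hCne
    · exact hx
  · intro x hx
    have hxi : x ≠ i := fun h => hi (h ▸ hx)
    have hsf : ({i} : Finset ℕ) ∉ π'.filter (fun C => x ∈ C) := by
      simp [hxi]
    rw [Finset.filter_erase, Finset.erase_eq_of_notMem hsf]
    exact hπ'.2.2 x (Finset.mem_insert_of_mem hx)

lemma blockOf_insertSingle (hi : i ∉ M') (hπ : IsPartition M' π) :
    blockOf (insert {i} π) i = {i} :=
  ((isPartition_insertSingle hi hπ).eq_blockOf (Finset.mem_insert_self i M')
    (Finset.mem_insert_self _ _) (Finset.mem_singleton_self i)).symm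

end TUX
namespace TUX

variable {M' : Finset ℕ} {π π' : Finset (Finset ℕ)} {i x : ℕ}

lemma blockOf_facts (hi : i ∉ M') (hπ' : IsPartition (insert i M') π')
    (hni : ({i} : Finset ℕ) ∉ π') :
    blockOf π' i ∈ π' ∧ i ∈ blockOf π' i ∧ ((blockOf π' i).erase i).Nonempty ∧
      (blockOf π' i).erase i ⊆ M' ∧ (blockOf π' i).erase i ∉ π' := by
  obtain ⟨hA, hiA⟩ := hπ'.blockOf_mem (Finset.mem_insert_self i M')
  set A := blockOf π' i with hAdef
  have hAne : A ≠ {i} := fun h => hni (h ▸ hA)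
  have hA'ne : (A.erase i).Nonempty := by
    rw [Finset.nonempty_iff_ne_empty]
    intro h
    rcases (Finset.erase_eq_empty_iff A i).mp h with h | h
    · exact hπ'.2.1 (h ▸ hA)
    · exact hAne h
  have hA'sub : A.erase i ⊆ M' := by
    intro x hx
    obtain ⟨hxi, hxA⟩ := Finset.mem_erase.mp hx
    rcases Finset.mem_insert.mp (hπ'.1 A hA hxA) with h | h
    · exact absurd h hxi
    · exact h
  have hA'nm : A.erase i ∉ π' := by
    intro h
    obtain ⟨x, hx⟩ := hA'ne
    obtain ⟨hxi, hxA⟩ := Finset.mem_erase.mp hx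
    have hxM : x ∈ insert i M' := hπ'.1 A hA hxA
    have heq := (hπ'.eq_blockOf hxM h hx).trans (hπ'.eq_blockOf hxM hA hxA).symm
    have h2 : i ∈ A.erase i := by rw [heq]; exact hiA
    simp at h2
  exact ⟨hA, hiA, hA'ne, hA'sub, hA'nm⟩

lemma notMem_of_mem_erase_blockOf (hπ' : IsPartition (insert i M') π')
    {C : Finset ℕ} (hC : C ∈ π'.erase (blockOf π' i)) : i ∉ C := by
  intro hiC
  exact Finset.ne_of_mem_erase hC
    (hπ'.eq_blockOf (Finset.mem_insert_self i M') (Finset.mem_of_mem_erase hC) hiC)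

lemma isPartition_removeBlock (hi : i ∉ M') (hπ' : IsPartition (insert i M') π')
    (hni : ({i} : Finset ℕ) ∉ π') :
    IsPartition M' (insert ((blockOf π' i).erase i) (π'.erase (blockOf π' i))) := by
  obtain ⟨hA, hiA, hA'ne, hA'sub, hA'nm⟩ := blockOf_facts hi hπ' hni
  set A := blockOf π' i with hAdef
  refine ⟨?_, ?_, ?_⟩
  · intro C hC
    rcases Finset.mem_insert.mp hC with rfl | hC
    · exact hA'sub
    · intro x hxC
      rcases Finset.mem_insert.mp (hπ'.1 C (Finset.mem_of_mem_erase hC) hxC) with rfl | h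
      · exact absurd hxC (notMem_of_mem_erase_blockOf hπ' hC)
      · exact h
  · intro h
    rcases Finset.mem_insert.mp h with h | h
    · exact hA'ne.ne_empty h.symm
    · exact hπ'.2.1 (Finset.mem_of_mem_erase h)
  · intro x hx
    have hxi : x ≠ i := fun h => hi (h ▸ hx)
    have hxM : x ∈ insert i M' := Finset.mem_insert_of_mem hx
    by_cases hxA : x ∈ A
    · have hxA' : x ∈ A.erase i := Finset.mem_erase.mpr ⟨hxi, hxA⟩
      have h1 : (π'.erase A).filter (fun C => x ∈ C) = ∅ := by
        refine Finset.filter_eq_empty_iff.mpr (fun {C} hC hxC => ?_)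
        exact (Finset.ne_of_mem_erase hC)
          ((hπ'.eq_blockOf hxM (Finset.mem_of_mem_erase hC) hxC).trans
            (hπ'.eq_blockOf hxM hA hxA).symm)
      rw [Finset.filter_insert, if_pos hxA', h1]
      simp
    · have hxA' : x ∉ A.erase i := fun h => hxA (Finset.mem_of_mem_erase h)
      have hAf : A ∉ π'.filter (fun C => x ∈ C) := fun h =>
        hxA (Finset.mem_filter.mp h).2
      rw [Finset.filter_insert, if_neg hxA', Finset.filter_erase,
        Finset.erase_eq_of_notMem hAf]
      exact hπ'.2.2 x hxM

lemma addToBlock_removeBlock (hi : i ∉ M') (hπ' : IsPartition (insert i M') π')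
    (hni : ({i} : Finset ℕ) ∉ π') :
    addToBlock (insert ((blockOf π' i).erase i) (π'.erase (blockOf π' i))) i
      ((blockOf π' i).erase i) = π' := by
  obtain ⟨hA, hiA, hA'ne, hA'sub, hA'nm⟩ := blockOf_facts hi hπ' hni
  set A := blockOf π' i with hAdef
  have h1 : A.erase i ∉ π'.erase A := fun h => hA'nm (Finset.mem_of_mem_erase h)
  rw [addToBlock, Finset.erase_insert h1, Finset.insert_erase hiA,
    Finset.insert_erase hA]

end TUX
namespace TUX

variable {M' : Finset ℕ} {i : ℕ}

lemma crp_step (hi : i ∉ M') (f : Finset (Finset ℕ) → ℝ) :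
    ∑ π' ∈ partitionsOf (insert i M'), pstar (insert i M') π' * f π'
      = ∑ π ∈ partitionsOf M',
          pstar M' π * (((M'.card : ℝ) + 1)⁻¹ *
            (f (insert {i} π) + ∑ B ∈ π, (B.card : ℝ) * f (addToBlock π i B))) := by
  rw [← Finset.sum_filter_add_sum_filter_not (partitionsOf (insert i M'))
    (fun π' => ({i} : Finset ℕ) ∈ π')]
  have h1 : ∑ π ∈ partitionsOf M',
        pstar M' π * ((M'.card : ℝ) + 1)⁻¹ * f (insert {i} π)
      = ∑ π' ∈ (partitionsOf (insert i M')).filter (fun π' => ({i} : Finset ℕ) ∈ π'),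
          pstar (insert i M') π' * f π' := by
    refine Finset.sum_nbij' (fun π => insert {i} π) (fun π' => π'.erase {i})
      ?_ ?_ ?_ ?_ ?_
    · intro π hπ
      rw [mem_partitionsOf] at hπ
      exact Finset.mem_filter.mpr ⟨mem_partitionsOf.mpr (isPartition_insertSingle hi hπ),
        Finset.mem_insert_self _ _⟩
    · intro π' hπ'
      obtain ⟨hπ'm, hmem⟩ := Finset.mem_filter.mp hπ'
      exact mem_partitionsOf.mpr (isPartition_eraseSingle hi (mem_partitionsOf.mp hπ'm) hmem)
    · intro π hπ
      rw [mem_partitionsOf] at hπ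
      exact Finset.erase_insert (hπ.singleton_notMem hi)
    · intro π' hπ'
      exact Finset.insert_erase (Finset.mem_filter.mp hπ').2
    · intro π hπ
      rw [mem_partitionsOf] at hπ
      rw [pstar_insertSingle hi hπ]
  have h2 : ∑ π ∈ partitionsOf M', ∑ B ∈ π,
        pstar M' π * ((M'.card : ℝ) + 1)⁻¹ * ((B.card : ℝ) * f (addToBlock π i B))
      = ∑ π' ∈ (partitionsOf (insert i M')).filter (fun π' => ({i} : Finset ℕ) ∉ π'),
          pstar (insert i M') π' * f π' := by
    rw [Finset.sum_sigma' (partitionsOf M') (fun π => π)]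
    refine Finset.sum_nbij' (fun p => addToBlock p.1 i p.2)
      (fun π' => ⟨insert ((blockOf π' i).erase i) (π'.erase (blockOf π' i)),
        (blockOf π' i).erase i⟩) ?_ ?_ ?_ ?_ ?_
    · rintro ⟨π, B⟩ hp
      obtain ⟨hπ, hB⟩ := Finset.mem_sigma.mp hp
      rw [mem_partitionsOf] at hπ
      exact Finset.mem_filter.mpr ⟨mem_partitionsOf.mpr (isPartition_addToBlock hi hπ hB),
        singleton_notMem_addToBlock hi hπ hB⟩
    · intro π' hπ'
      obtain ⟨hπ'm, hni⟩ := Finset.mem_filter.mp hπ'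
      rw [mem_partitionsOf] at hπ'm
      exact Finset.mem_sigma.mpr
        ⟨mem_partitionsOf.mpr (isPartition_removeBlock hi hπ'm hni),
          Finset.mem_insert_self _ _⟩
    · rintro ⟨π, B⟩ hp
      obtain ⟨hπ, hB⟩ := Finset.mem_sigma.mp hp
      rw [mem_partitionsOf] at hπ
      have hiB : i ∉ B := hπ.notMem_block hi hB
      have hkey : insert i B ∉ π.erase B :=
        fun h => hi (hπ.1 _ (Finset.mem_of_mem_erase h) (Finset.mem_insert_self i B))
      have e1 : blockOf (addToBlock π i B) i = insert i B := blockOf_addToBlock hi hπ hB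
      have e2 : (addToBlock π i B).erase (insert i B) = π.erase B := by
        rw [addToBlock]; exact Finset.erase_insert hkey
      dsimp only
      rw [e1, e2, Finset.erase_insert hiB, Finset.insert_erase hB]
    · intro π' hπ'
      obtain ⟨hπ'm, hni⟩ := Finset.mem_filter.mp hπ'
      rw [mem_partitionsOf] at hπ'm
      exact addToBlock_removeBlock hi hπ'm hni
    · rintro ⟨π, B⟩ hp
      obtain ⟨hπ, hB⟩ := Finset.mem_sigma.mp hp
      rw [mem_partitionsOf] at hπ
      rw [pstar_addToBlock hi hπ hB]
      ring
  rw [← h1, ← h2, ← Finset.sum_add_distrib]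
  refine Finset.sum_congr rfl fun π hπ => ?_
  rw [← Finset.mul_sum]
  ring

lemma restrict_key : ∀ (l : List ℕ) (N S : Finset ℕ) (w : Game), S ⊆ N → l.Nodup →
    l.toFinset = N \ S →
    restrictL N w l S ∅ = ∑ π ∈ partitionsOf (N \ S), pstar (N \ S) π * w S π := by
  intro l
  induction l with
  | nil =>
    intro N S w _ _ hl
    have he : N \ S = ∅ := by simpa using hl.symm
    rw [restrictL, he, partitionsOf_empty, Finset.sum_singleton, pstar]
    simp [Nat.factorial]
  | cons i l ih =>
    intro N S w hS hnd hl
    have hiNS : i ∈ N \ S := by rw [← hl]; simp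
    have hiN : i ∈ N := (Finset.mem_sdiff.mp hiNS).1
    have hiS : i ∉ S := (Finset.mem_sdiff.mp hiNS).2
    have hSsub : S ⊆ N.erase i := fun x hx =>
      Finset.mem_erase.mpr ⟨fun h => hiS (h ▸ hx), hS hx⟩
    have hil : i ∉ l.toFinset := by
      simp only [List.mem_toFinset]
      exact (List.nodup_cons.mp hnd).1
    have hM' : l.toFinset = (N.erase i) \ S := by
      have h1 : insert i l.toFinset = N \ S := by
        rw [← hl]; simp
      have h2 : (N.erase i) \ S = (N \ S).erase i := by
        ext x; simp only [Finset.mem_sdiff, Finset.mem_erase]; tauto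
      rw [h2, ← h1, Finset.erase_insert hil]
    rw [restrictL, ih (N.erase i) S (restrict1 N w i) hSsub (List.nodup_cons.mp hnd).2 hM']
    set M' := (N.erase i) \ S with hM'def
    have hiM' : i ∉ M' := by simp [hM'def]
    have hins : insert i M' = N \ S := by
      ext x
      simp only [hM'def, Finset.mem_insert, Finset.mem_sdiff, Finset.mem_erase]
      constructor
      · rintro (rfl | ⟨⟨_, h1⟩, h2⟩)
        · exact ⟨hiN, hiS⟩
        · exact ⟨h1, h2⟩
      · rintro ⟨h1, h2⟩
        by_cases hx : x = i
        · exact Or.inl hx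
        · exact Or.inr ⟨⟨hx, h1⟩, h2⟩
    have hcard : ((N.card : ℝ) - (S.card : ℝ)) = (M'.card : ℝ) + 1 := by
      have h3 : S.card ≤ N.card := Finset.card_le_card hS
      have h4 : N.card - S.card = M'.card + 1 := by
        rw [← Finset.card_sdiff_of_subset hS, ← hins, Finset.card_insert_of_notMem hiM']
      have h5 := congrArg (Nat.cast : ℕ → ℝ) h4
      push_cast [Nat.cast_sub h3] at h5
      linarith
    rw [← hins, crp_step hiM' (w S)]
    refine Finset.sum_congr rfl fun π hπ => ?_
    rw [mem_partitionsOf] at hπ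
    congr 1
    rw [restrict1, hcard]
    congr 1
    have herase : (N \ S).erase i = M' := by
      rw [← hins, Finset.erase_insert hiM']
    rw [herase, hπ.sum_blockOf (fun B => w S (addToBlock π i B))]

end TUX

open TUX in
/-- The auxiliary TU game coincides with the average game. -/
theorem auxGame_eq_avg (N : Finset ℕ) (w : Game) (hw : IsTUX w) :
    ∀ S ⊆ N, auxGame N w S = avg N w S := by
  intro S hS
  simp only [auxGame, avg, restrictSet]
  exact restrict_key _ N S w hS (Finset.sort_nodup _ _) (Finset.sort_toFinset _ _)
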